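/- arXiv:0801.0731 — 2 statements merged into one kernel-verified Lean document; each statement's English description precedes it below -/
import Mathlib

section
/- Let A be a Banach algebra. If A is approximately biflat and has an approximate identity, then A is pseudo-amenable. -/
noncomputable section

open Filter Topology ComplexConjugate

universe u

/-- A realization of the (Banach-space) projective tensor product `E ⊗̂ F` of two complex
Banach spaces: a Banach space `X` with a contractive bilinear map `tmul` whose range spans a
dense subspace and which enjoys the universal property of the projective tensor product. -/
structure ProjTensor (E : Type u) (F : Type u) [NormedAddCommGroup E] [NormedSpace ℂ E]
    [NormedAddCommGroup F] [NormedSpace ℂ F] : Type (u + 1) where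
  X : Type u
  [instNormed : NormedAddCommGroup X]
  [instSpace : NormedSpace ℂ X]
  [instComplete : CompleteSpace X]
  tmul : E →L[ℂ] F →L[ℂ] X
  norm_tmul_le : ∀ (e : E) (f : F), ‖tmul e f‖ ≤ ‖e‖ * ‖f‖
  dense_span : Dense (↑(Submodule.span ℂ (Set.range fun p : E × F => tmul p.1 p.2)) : Set X)
  lift : ∀ (W : Type u) [NormedAddCommGroup W] [NormedSpace ℂ W] [CompleteSpace W]
      (b : E →L[ℂ] F →L[ℂ] W),
      ∃ L : X →L[ℂ] W, ‖L‖ ≤ ‖b‖ ∧ ∀ (e : E) (f : F), L (tmul e f) = b e f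

attribute [instance] ProjTensor.instNormed ProjTensor.instSpace ProjTensor.instComplete

section BanachAlgebra

variable (A : Type u) [NonUnitalNormedRing A] [NormedSpace ℂ A]
  [IsScalarTower ℂ A A] [SMulCommClass ℂ A A] [CompleteSpace A]

/-- Left multiplication `b ↦ a * b` as a continuous linear map. -/
def lmulOp (a : A) : A →L[ℂ] A := ContinuousLinearMap.mul ℂ A a

/-- Right multiplication `b ↦ b * a` as a continuous linear map. -/
def rmulOp (a : A) : A →L[ℂ] A := (ContinuousLinearMap.mul ℂ A).flip a

/-- A realization of the projective tensor square `A ⊗̂ A` of a Banach algebra `A`, together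
with its canonical `A`-bimodule actions `a · (b ⊗ c) = (a*b) ⊗ c`, `(b ⊗ c) · a = b ⊗ (c*a)`,
and the multiplication map `π : A ⊗̂ A → A`, `π (b ⊗ c) = b * c`. -/
structure TensorSquare extends ProjTensor A A where
  lsmul : A → (X →L[ℂ] X)
  rsmul : A → (X →L[ℂ] X)
  lsmul_tmul : ∀ a b c : A, lsmul a (tmul b c) = tmul (a * b) c
  rsmul_tmul : ∀ a b c : A, rsmul a (tmul b c) = tmul b (c * a)
  lsmul_norm_le : ∀ (a : A) (m : X), ‖lsmul a m‖ ≤ ‖a‖ * ‖m‖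
  rsmul_norm_le : ∀ (a : A) (m : X), ‖rsmul a m‖ ≤ ‖a‖ * ‖m‖
  mulMap : X →L[ℂ] A
  mulMap_tmul : ∀ a b : A, mulMap (tmul a b) = a * b

variable {A}

namespace TensorSquare

variable (ts : TensorSquare A)

/-- The adjoint `π* : A* → (A ⊗̂ A)*` of the multiplication map. -/
def piStar (φ : A →L[ℂ] ℂ) : ts.X →L[ℂ] ℂ := φ.comp ts.mulMap

/-- A bounded linear map `θ : (A ⊗̂ A)* → A*` is an `A`-bimodule morphism (for the canonical
dual bimodule actions `⟨a·ψ, m⟩ = ⟨ψ, m·a⟩`, `⟨ψ·a, m⟩ = ⟨ψ, a·m⟩` on `(A ⊗̂ A)*` and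
`⟨a·φ, b⟩ = ⟨φ, b*a⟩`, `⟨φ·a, b⟩ = ⟨φ, a*b⟩` on `A*`). -/
def IsBimoduleMorphism (θ : (ts.X →L[ℂ] ℂ) →L[ℂ] (A →L[ℂ] ℂ)) : Prop :=
  ∀ (a : A) (ψ : ts.X →L[ℂ] ℂ),
    θ (ψ.comp (ts.rsmul a)) = (θ ψ).comp (rmulOp A a) ∧
    θ (ψ.comp (ts.lsmul a)) = (θ ψ).comp (lmulOp A a)

/-- `A` is biflat: there is a bounded `A`-bimodule morphism `θ : (A ⊗̂ A)* → A*` with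
`θ ∘ π* = id`. -/
def Biflat : Prop :=
  ∃ θ : (ts.X →L[ℂ] ℂ) →L[ℂ] (A →L[ℂ] ℂ),
    ts.IsBimoduleMorphism θ ∧ ∀ φ : A →L[ℂ] ℂ, θ (ts.piStar φ) = φ

/-- `A` is approximately biflat: there is a net `θ_δ : (A ⊗̂ A)* → A*` of bounded
`A`-bimodule morphisms with `θ_δ ∘ π* → id_{A*}` in the weak* operator topology. -/
def ApproximatelyBiflat : Prop :=
  ∃ (ι : Type u) (ne : Nonempty ι) (sl : SemilatticeSup ι)
    (θ : ι → ((ts.X →L[ℂ] ℂ) →L[ℂ] (A →L[ℂ] ℂ))),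
    letI := ne
    letI := sl
    (∀ i, ts.IsBimoduleMorphism (θ i)) ∧
      ∀ (a : A) (φ : A →L[ℂ] ℂ),
        Tendsto (fun i => θ i (ts.piStar φ) a) atTop (𝓝 (φ a))

/-- `A` is pseudo-amenable: there is a net `(m_α)` in `A ⊗̂ A` with
`a · m_α - m_α · a → 0` and `π(m_α) a → a` in norm for every `a ∈ A`. -/
def PseudoAmenable : Prop :=
  ∃ (ι : Type u) (ne : Nonempty ι) (sl : SemilatticeSup ι) (m : ι → ts.X),
    letI := ne
    letI := sl
    (∀ a : A, Tendsto (fun i => ts.lsmul a (m i) - ts.rsmul a (m i)) atTop (𝓝 0)) ∧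
      ∀ a : A, Tendsto (fun i => ts.mulMap (m i) * a) atTop (𝓝 a)

/-- `A` is pseudo-contractible: there is a net `(m_α)` in `A ⊗̂ A` with
`a · m_α = m_α · a` for all `a, α`, and `π(m_α) a → a` in norm for every `a ∈ A`. -/
def PseudoContractible : Prop :=
  ∃ (ι : Type u) (ne : Nonempty ι) (sl : SemilatticeSup ι) (m : ι → ts.X),
    letI := ne
    letI := sl
    (∀ (i : ι) (a : A), ts.lsmul a (m i) = ts.rsmul a (m i)) ∧
      ∀ a : A, Tendsto (fun i => ts.mulMap (m i) * a) atTop (𝓝 a)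

end TensorSquare

end BanachAlgebra

/-- A Banach algebra has a (two-sided, not necessarily bounded) approximate identity. -/
def HasApproximateIdentity (B : Type u) [NonUnitalNormedRing B] : Prop :=
  ∃ (ι : Type u) (ne : Nonempty ι) (sl : SemilatticeSup ι) (e : ι → B),
    letI := ne
    letI := sl
    ∀ b : B, Tendsto (fun i => e i * b) atTop (𝓝 b) ∧ Tendsto (fun i => b * e i) atTop (𝓝 b)

/-- A Banach algebra has a central approximate identity. -/
def HasCentralApproximateIdentity (B : Type u) [NonUnitalNormedRing B] : Prop :=
  ∃ (ι : Type u) (ne : Nonempty ι) (sl : SemilatticeSup ι) (e : ι → B),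
    letI := ne
    letI := sl
    (∀ (i : ι) (b : B), e i * b = b * e i) ∧
      ∀ b : B, Tendsto (fun i => e i * b) atTop (𝓝 b) ∧ Tendsto (fun i => b * e i) atTop (𝓝 b)

/-!
Fix a finite family `a₁, …, aₙ` in `A`. It suffices to show that `((0, a_k))_k` lies in the norm
closure of `{((a_k·m - m·a_k, π(m) a_k))_k : m ∈ A ⊗̂ A}`: indexing approximants by finite sets
and tolerances then gives the net. By Hahn–Banach, this means that every family of functionals
`(ψ_k, φ_k)` annihilating that range satisfies `∑ φ_k(a_k) = 0`. Annihilation says that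
`∑ (ψ_k·a_k - a_k·ψ_k) + π*(∑ a_k·φ_k) = 0` in `(A ⊗̂ A)*`. Applying a bimodule morphism `θ_δ` and
evaluating at an approximate identity `e_i` gives `∑ θ_δ(π*φ_k)(a_k) = 0` in the limit over `i`,
and then `∑ φ_k(a_k) = 0` in the limit over `δ`.
-/

theorem Submodule.mem_topologicalClosure_of_forall_dual {𝕜 F : Type*} [RCLike 𝕜]
    [NormedAddCommGroup F] [NormedSpace 𝕜 F] (p : Submodule 𝕜 F) {t : F}
    (h : ∀ L : StrongDual 𝕜 F, (∀ x ∈ p, L x = 0) → L t = 0) : t ∈ p.topologicalClosure := by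
  by_contra ht
  have : IsClosed (p.topologicalClosure : Set F) := p.isClosed_topologicalClosure
  obtain ⟨g, hg⟩ := SeparatingDual.exists_ne_zero (R := 𝕜)
    (x := p.topologicalClosure.mkQ t) (by simpa [Submodule.Quotient.mk_eq_zero] using ht)
  refine hg (h (g ∘L p.topologicalClosure.mkQL) fun x hx => ?_)
  simp [(Submodule.Quotient.mk_eq_zero _).2 (p.le_topologicalClosure hx)]

theorem exists_tendsto_of_forall_finset_mem_closure {α : Type u} {X E : Type*}
    [PseudoMetricSpace E] (g : α → X → E) (c : α → E)
    (h : ∀ F : Finset α, (fun a : F => c a) ∈ closure (Set.range fun x (a : F) => g a x)) :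
    ∃ m : Finset α × ℕ → X, ∀ a, Tendsto (fun p => g a (m p)) atTop (𝓝 (c a)) := by
  classical
  have hF : ∀ p : Finset α × ℕ, ∃ x, ∀ a ∈ p.1, dist (g a x) (c a) < 1 / (p.2 + 1) := by
    rintro ⟨F, n⟩
    obtain ⟨_, ⟨x, rfl⟩, hx⟩ := Metric.mem_closure_iff.1 (h F) _ Nat.one_div_pos_of_nat
    refine ⟨x, fun a ha => ?_⟩
    simpa [dist_comm] using (dist_pi_lt_iff Nat.one_div_pos_of_nat).1 hx ⟨a, ha⟩
  choose m hm using hF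
  refine ⟨m, fun a => Metric.tendsto_atTop.2 fun ε hε => ?_⟩
  obtain ⟨N, hN⟩ := exists_nat_one_div_lt hε
  refine ⟨({a}, N), fun p hp => ?_⟩
  calc dist (g a (m p)) (c a) < 1 / ((p.2 : ℝ) + 1) := hm p a (Finset.singleton_subset_iff.1 hp.1)
    _ ≤ 1 / ((N : ℝ) + 1) := by gcongr; exact hp.2
    _ < ε := hN

theorem HasApproximateIdentity.sum_apply_eq_zero_of_forall_mul {A : Type u} {M ι : Type*}
    [NonUnitalNormedRing A] [AddCommGroup M] [TopologicalSpace M] [ContinuousAdd M]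
    [ContinuousSub M] [T2Space M] (hai : HasApproximateIdentity A) [Fintype ι] (a : ι → A)
    (μ ν : ι → A → M) (hμ : ∀ k, Continuous (μ k)) (hν : ∀ k, Continuous (ν k))
    (h : ∀ b, ∑ k, (μ k (a k * b) - μ k (b * a k) + ν k (b * a k)) = 0) :
    ∑ k, ν k (a k) = 0 := by
  obtain ⟨κ, _, _, e, he⟩ := hai
  have hlim : Tendsto (fun i => ∑ k, (μ k (a k * e i) - μ k (e i * a k) + ν k (e i * a k)))
      atTop (𝓝 (∑ k, ν k (a k))) := by
    simpa using tendsto_finsetSum _ fun k _ =>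
      (((hμ k).tendsto _).comp (he (a k)).2).sub (((hμ k).tendsto _).comp (he (a k)).1)
        |>.add (((hν k).tendsto _).comp (he (a k)).1)
  simp only [h] at hlim
  exact tendsto_nhds_unique hlim tendsto_const_nhds

namespace TensorSquare

variable {A : Type u} [NonUnitalNormedRing A] [NormedSpace ℂ A]

variable (ts : TensorSquare A)

theorem ext_tmul {W : Type*} [NormedAddCommGroup W] [NormedSpace ℂ W] {f g : ts.X →L[ℂ] W}
    (h : ∀ b c : A, f (ts.tmul b c) = g (ts.tmul b c)) : f = g := by
  refine ContinuousLinearMap.ext fun x => congrFun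
    (Continuous.ext_on ts.dense_span f.continuous g.continuous fun y hy => ?_) x
  induction hy using Submodule.span_induction with
  | mem y hy => obtain ⟨p, rfl⟩ := hy; exact h p.1 p.2
  | zero => simp
  | add y z _ _ hy hz => simp only [map_add, hy, hz]
  | smul c y _ hy => simp only [map_smul, hy]

variable [IsScalarTower ℂ A A] [SMulCommClass ℂ A A]

theorem mulMap_rsmul (a : A) (m : ts.X) : ts.mulMap (ts.rsmul a m) = ts.mulMap m * a := by
  have : ts.mulMap ∘L ts.rsmul a = rmulOp A a ∘L ts.mulMap :=
    ts.ext_tmul fun b c => by simp [ts.mulMap_tmul, ts.rsmul_tmul, rmulOp, mul_assoc]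
  exact congr($this m)

variable {ts} in
theorem IsBimoduleMorphism.sum_apply_mul_eq_zero {θ : (ts.X →L[ℂ] ℂ) →L[ℂ] (A →L[ℂ] ℂ)}
    (hθ : ts.IsBimoduleMorphism θ) {ι : Type*} [Fintype ι] (a : ι → A)
    (ψ : ι → ts.X →L[ℂ] ℂ) (φ : ι → A →L[ℂ] ℂ)
    (h : ∀ m, ∑ k, (ψ k (ts.lsmul (a k) m - ts.rsmul (a k) m) + φ k (ts.mulMap m * a k)) = 0)
    (b : A) :
    ∑ k, (θ (ψ k) (a k * b) - θ (ψ k) (b * a k) + θ (ts.piStar (φ k)) (b * a k)) = 0 := by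
  have hzero : ∑ k, (ψ k ∘L ts.lsmul (a k) - ψ k ∘L ts.rsmul (a k)
      + ts.piStar (φ k) ∘L ts.rsmul (a k)) = 0 := by
    ext m
    simpa [piStar, ts.mulMap_rsmul] using h m
  simpa [(hθ _ _).1, (hθ _ _).2, lmulOp, rmulOp] using congr(θ $hzero b)

theorem sum_apply_eq_zero_of_approximatelyBiflat (hbf : ts.ApproximatelyBiflat)
    (hai : HasApproximateIdentity A) {ι : Type*} [Fintype ι] (a : ι → A)
    (ψ : ι → ts.X →L[ℂ] ℂ) (φ : ι → A →L[ℂ] ℂ)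
    (h : ∀ m, ∑ k, (ψ k (ts.lsmul (a k) m - ts.rsmul (a k) m) + φ k (ts.mulMap m * a k)) = 0) :
    ∑ k, φ k (a k) = 0 := by
  obtain ⟨κ, _, _, θ, hθ, hlim⟩ := hbf
  have hzero : ∀ δ, ∑ k, θ δ (ts.piStar (φ k)) (a k) = 0 := fun δ =>
    hai.sum_apply_eq_zero_of_forall_mul a _ _ (fun k => (θ δ (ψ k)).continuous)
      (fun k => (θ δ (ts.piStar (φ k))).continuous) ((hθ δ).sum_apply_mul_eq_zero a ψ φ h)
  have hsum := tendsto_finsetSum Finset.univ fun k _ => hlim (a k) (φ k)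
  simp only [hzero] at hsum
  exact tendsto_nhds_unique hsum tendsto_const_nhds

def approxDiagonalMap (a : A) : ts.X →L[ℂ] ts.X × A :=
  (ts.lsmul a - ts.rsmul a).prod (rmulOp A a ∘L ts.mulMap)

theorem mem_closure_range_approxDiagonalMap (hbf : ts.ApproximatelyBiflat)
    (hai : HasApproximateIdentity A) {ι : Type*} [Fintype ι] (a : ι → A) :
    (fun k => ((0 : ts.X), a k)) ∈ closure (Set.range fun m k => ts.approxDiagonalMap (a k) m) := by
  classical
  let S := ContinuousLinearMap.pi fun k => ts.approxDiagonalMap (a k)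
  suffices (fun k => ((0 : ts.X), a k)) ∈
      (LinearMap.range (S : ts.X →ₗ[ℂ] ι → ts.X × A)).topologicalClosure by
    rwa [← SetLike.mem_coe, Submodule.topologicalClosure_coe, LinearMap.coe_range] at this
  refine Submodule.mem_topologicalClosure_of_forall_dual _ fun L hL => ?_
  let ψ k := L ∘L .single ℂ _ k ∘L .inl ℂ ts.X A
  let φ k := L ∘L .single ℂ _ k ∘L .inr ℂ ts.X A
  have hdecomp (z : ι → ts.X × A) : L z = ∑ k, (ψ k (z k).1 + φ k (z k).2) := by
    simp only [ψ, φ, ← ContinuousLinearMap.comp_assoc, ContinuousLinearMap.comp_inl_add_comp_inr,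
      ContinuousLinearMap.sum_comp_single]
  have h := ts.sum_apply_eq_zero_of_approximatelyBiflat hbf hai a ψ φ fun m => by
    simpa [hdecomp, S, approxDiagonalMap, rmulOp] using hL (S m) ⟨m, rfl⟩
  simpa [hdecomp] using h

end TensorSquare

theorem pseudoAmenable_of_approximatelyBiflat_general (A : Type u) [NonUnitalNormedRing A]
    [NormedSpace ℂ A] [IsScalarTower ℂ A A] [SMulCommClass ℂ A A]
    (ts : TensorSquare A) (hbf : ts.ApproximatelyBiflat)
    (hai : HasApproximateIdentity A) : ts.PseudoAmenable := by
  classical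
  obtain ⟨m, hm⟩ := exists_tendsto_of_forall_finset_mem_closure
    (fun a m => ts.approxDiagonalMap a m) (fun a => ((0 : ts.X), a))
    fun F => ts.mem_closure_range_approxDiagonalMap hbf hai Subtype.val
  refine ⟨Finset A × ℕ, inferInstance, inferInstance, m, fun a => ?_, fun a => ?_⟩
  · simpa [TensorSquare.approxDiagonalMap] using (hm a).fst_nhds
  · simpa [TensorSquare.approxDiagonalMap, rmulOp] using (hm a).snd_nhds

/-- Theorem 2.4, second part: if a Banach algebra `A` is approximately
biflat and has an approximate identity, then `A` is pseudo-amenable. -/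
theorem pseudoAmenable_of_approximatelyBiflat (A : Type u) [NonUnitalNormedRing A]
    [NormedSpace ℂ A] [IsScalarTower ℂ A A] [SMulCommClass ℂ A A] [CompleteSpace A]
    (ts : TensorSquare A) (hbf : ts.ApproximatelyBiflat)
    (hai : HasApproximateIdentity A) : ts.PseudoAmenable :=
  pseudoAmenable_of_approximatelyBiflat_general A ts hbf hai
end
end

section
/- Let {A_i : i ∈ I} be a family of Banach algebras, each of which is approximately biflat. Then for every 1 ≤ p < ∞, the ℓᵖ-direct sum ⊕ᵖ_{i∈I} A_i (with coordinatewise multiplication) is approximately biflat. -/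
noncomputable section

open Filter Topology ComplexConjugate

universe u

/-! The `ℓᵖ`-norm bounds each coordinate of a finitely supported sum `∑ i ∈ s, emb i (a i)` by
the norm of the sum, so the coordinates extend to projections `P i : D → A i`. These are
multiplicative, satisfy `emb i c * d = emb i (c * P i d)`, and their partial sums
`∑ i ∈ F, emb i ∘ P i` converge strongly to the identity. Hence a bimodule morphism
`θ : (Aᵢ ⊗̂ Aᵢ)* → Aᵢ*` transfers to the bimodule morphism `P i* ∘ θ ∘ (emb i ⊗ emb i)*` of `D`,
and the net `∑ i ∈ F, P i* ∘ θᵢ(f F i) ∘ (emb i ⊗ emb i)*`, indexed by finite sets `F` together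
with a choice of indices `f F i` depending on `F`, approximates the identity on `D*` weak*:
letting the index depend on `F` makes the total error over `F` small even for uncountable `I`. -/

theorem DFinsupp.exists_forall_notMem_eq_zero {ι : Type*} {β : ι → Type*} [∀ i, Zero (β i)]
    (a : Π₀ i, β i) : ∃ s : Finset ι, ∀ i ∉ s, a i = 0 := by
  classical
  exact ⟨a.support, fun i => DFinsupp.notMem_support_iff.mp⟩

section LpDirectSum

variable {𝕜 : Type*} [NontriviallyNormedField 𝕜] {I : Type*} {A : I → Type*}
  [∀ i, NormedAddCommGroup (A i)] [∀ i, NormedSpace 𝕜 (A i)]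
  {D : Type*} [NormedAddCommGroup D] [NormedSpace 𝕜 D]

structure IsLpDirectSum (p : ℝ) (emb : ∀ i, A i →L[𝕜] D) : Prop where
  pos : 0 < p
  norm_sum_rpow :
    ∀ (s : Finset I) (a : ∀ i, A i), ‖∑ i ∈ s, emb i (a i)‖ ^ p = ∑ i ∈ s, ‖a i‖ ^ p
  dense_span : Dense (Submodule.span 𝕜 (⋃ i, Set.range (emb i)) : Set D)

namespace IsLpDirectSum

variable {p : ℝ} {emb : ∀ i, A i →L[𝕜] D}

theorem norm_sum_le_of_subset (h : IsLpDirectSum p emb) {F s : Finset I} (hFs : F ⊆ s)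
    (a : ∀ i, A i) : ‖∑ i ∈ F, emb i (a i)‖ ≤ ‖∑ i ∈ s, emb i (a i)‖ := by
  rw [← Real.rpow_le_rpow_iff (norm_nonneg _) (norm_nonneg _) h.pos, h.norm_sum_rpow,
    h.norm_sum_rpow]
  exact Finset.sum_le_sum_of_subset_of_nonneg hFs fun i _ _ => by positivity

theorem norm_emb (h : IsLpDirectSum p emb) (i : I) (b : A i) : ‖emb i b‖ = ‖b‖ := by
  classical
  have := h.norm_sum_rpow {i} (Pi.single i b)
  simp only [Finset.sum_singleton, Pi.single_eq_same] at this
  exact (Real.rpow_left_inj (norm_nonneg _) (norm_nonneg _) h.pos.ne').mp this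

theorem hom_ext (h : IsLpDirectSum p emb) {E : Type*} [NormedAddCommGroup E] [NormedSpace 𝕜 E]
    {f g : D →L[𝕜] E} (hfg : ∀ i b, f (emb i b) = g (emb i b)) : f = g :=
  ContinuousLinearMap.ext_on h.dense_span <| by
    rintro _ ⟨_, ⟨i, rfl⟩, b, rfl⟩
    exact hfg i b

end IsLpDirectSum

variable [DecidableEq I]

def embSum (emb : ∀ i, A i →L[𝕜] D) : (Π₀ i, A i) →ₗ[𝕜] D :=
  DFinsupp.lsum ℕ fun i => (emb i : A i →ₗ[𝕜] D)

theorem embSum_single (emb : ∀ i, A i →L[𝕜] D) (i : I) (b : A i) :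
    embSum emb (DFinsupp.single i b) = emb i b :=
  DFinsupp.lsum_single ℕ _ i b

theorem embSum_eq_sum (emb : ∀ i, A i →L[𝕜] D) {a : Π₀ i, A i} {s : Finset I}
    (hs : ∀ i ∉ s, a i = 0) : embSum emb a = ∑ i ∈ s, emb i (a i) := by
  classical
  refine (DFinsupp.sumAddHom_apply _ a).trans
    (DFinsupp.sum_of_support_subset (fun i hi => ?_) fun _ _ => map_zero _)
  by_contra his
  exact DFinsupp.mem_support_iff.mp hi (hs i his)

/-- Junk unless the coordinates of `embSum emb` are bounded by its norm, as they are under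
`IsLpDirectSum`. -/
def coordProj [∀ i, CompleteSpace (A i)] (emb : ∀ i, A i →L[𝕜] D) (i : I) : D →L[𝕜] A i :=
  (DFinsupp.lapply i).extendOfNorm (embSum emb)

namespace IsLpDirectSum

variable {p : ℝ} {emb : ∀ i, A i →L[𝕜] D}

theorem norm_le_norm_embSum (h : IsLpDirectSum p emb) (a : Π₀ i, A i) (i : I) :
    ‖a i‖ ≤ ‖embSum emb a‖ := by
  obtain ⟨s, hs⟩ := a.exists_forall_notMem_eq_zero
  have hs' : ∀ j ∉ insert i s, a j = 0 := fun j hj => hs j (hj <| Finset.mem_insert_of_mem ·)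
  rw [embSum_eq_sum emb hs', ← h.norm_emb]
  simpa using h.norm_sum_le_of_subset (Finset.singleton_subset_iff.mpr (s.mem_insert_self i)) a

theorem denseRange_embSum (h : IsLpDirectSum p emb) : DenseRange (embSum emb) := by
  have : Submodule.span 𝕜 (⋃ i, Set.range (emb i)) ≤ LinearMap.range (embSum emb) := by
    refine Submodule.span_le.mpr ?_
    rintro _ ⟨_, ⟨i, rfl⟩, b, rfl⟩
    exact ⟨DFinsupp.single i b, embSum_single emb i b⟩
  rw [DenseRange, ← LinearMap.coe_range]
  exact h.dense_span.mono this

variable [∀ i, CompleteSpace (A i)]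

theorem coordProj_embSum (h : IsLpDirectSum p emb) (a : Π₀ i, A i) (i : I) :
    coordProj emb i (embSum emb a) = a i :=
  LinearMap.extendOfNorm_eq h.denseRange_embSum ⟨1, fun a => by
    simpa using h.norm_le_norm_embSum a i⟩ a

theorem coordProj_emb_self (h : IsLpDirectSum p emb) (i : I) (b : A i) :
    coordProj emb i (emb i b) = b := by
  rw [← embSum_single, h.coordProj_embSum, DFinsupp.single_eq_same]

theorem coordProj_emb_of_ne (h : IsLpDirectSum p emb) {i j : I} (hij : j ≠ i) (b : A j) :
    coordProj emb i (emb j b) = 0 := by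
  rw [← embSum_single, h.coordProj_embSum, DFinsupp.single_eq_of_ne hij.symm]

theorem sum_emb_coordProj_embSum (h : IsLpDirectSum p emb) (F : Finset I) (a : Π₀ i, A i) :
    ∑ i ∈ F, emb i (coordProj emb i (embSum emb a)) = ∑ i ∈ F, emb i (a i) := by
  simp only [h.coordProj_embSum]

theorem norm_sum_emb_coordProj_le (h : IsLpDirectSum p emb) (F : Finset I) (y : D) :
    ‖∑ i ∈ F, emb i (coordProj emb i y)‖ ≤ ‖y‖ := by
  refine h.denseRange_embSum.induction_on y (isClosed_le (by fun_prop) continuous_norm)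
    fun a => ?_
  obtain ⟨s, hs⟩ := a.exists_forall_notMem_eq_zero
  rw [h.sum_emb_coordProj_embSum,
    embSum_eq_sum emb (s := F ∪ s) fun i hi => hs i (hi <| Finset.mem_union_right F ·)]
  exact h.norm_sum_le_of_subset Finset.subset_union_left a

theorem hasSum_emb_coordProj (h : IsLpDirectSum p emb) (y : D) :
    HasSum (fun i => emb i (coordProj emb i y)) y := by
  let Q : Finset I → D →L[𝕜] D := fun F => ∑ i ∈ F, (emb i).comp (coordProj emb i)
  have hQ : ∀ F y, Q F y = ∑ i ∈ F, emb i (coordProj emb i y) := fun F y => by simp [Q]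
  have hQ_equicont : Equicontinuous ((↑) ∘ Q) := by
    have hQ_le : ∀ F y, ‖Q F y‖ ≤ 1 * ‖y‖ := fun F y => by
      simpa [hQ] using h.norm_sum_emb_coordProj_le F y
    have hTFAE := (NormedSpace.equicontinuous_TFAE Q).out 3 1
    exact hTFAE.mp ⟨1, hQ_le⟩
  show Tendsto (fun F => ∑ i ∈ F, emb i (coordProj emb i y)) atTop (𝓝 y)
  simp only [← hQ]
  refine h.denseRange_embSum.induction_on (p := fun y => Tendsto (Q · y) atTop (𝓝 y)) y
    (hQ_equicont.isClosed_setOfPred_tendsto continuous_id) fun a => ?_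
  obtain ⟨s, hs⟩ := a.exists_forall_notMem_eq_zero
  refine tendsto_nhds_of_eventually_eq (eventually_atTop.mpr ⟨s, fun F hF => ?_⟩)
  rw [hQ, h.sum_emb_coordProj_embSum, embSum_eq_sum emb fun i hi => hs i (hi <| hF ·)]

end IsLpDirectSum

end LpDirectSum

namespace IsLpDirectSum

variable {𝕜 : Type*} [NontriviallyNormedField 𝕜] {I : Type*} {A : I → Type*}
  [∀ i, NonUnitalNormedRing (A i)] [∀ i, NormedSpace 𝕜 (A i)]
  [∀ i, IsScalarTower 𝕜 (A i) (A i)] [∀ i, SMulCommClass 𝕜 (A i) (A i)]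
  [∀ i, CompleteSpace (A i)] [DecidableEq I]
  {D : Type*} [NonUnitalNormedRing D] [NormedSpace 𝕜 D] [IsScalarTower 𝕜 D D]
  [SMulCommClass 𝕜 D D] {p : ℝ} {emb : ∀ i, A i →L[𝕜] D}

theorem emb_mul (h : IsLpDirectSum p emb)
    (hmul : ∀ i (a b : A i), emb i (a * b) = emb i a * emb i b)
    (horth : ∀ i j, i ≠ j → ∀ (a : A i) (b : A j), emb i a * emb j b = 0)
    {i : I} (c : A i) (d : D) : emb i c * d = emb i (c * coordProj emb i d) := by
  refine DFunLike.congr_fun (h.hom_ext (f := ContinuousLinearMap.mul 𝕜 D (emb i c))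
    (g := (emb i).comp ((ContinuousLinearMap.mul 𝕜 (A i) c).comp (coordProj emb i)))
    fun j b => ?_) d
  by_cases hji : j = i
  · subst hji
    simp [h.coordProj_emb_self, hmul]
  · simp [h.coordProj_emb_of_ne hji, horth i j (Ne.symm hji)]

theorem mul_emb (h : IsLpDirectSum p emb)
    (hmul : ∀ i (a b : A i), emb i (a * b) = emb i a * emb i b)
    (horth : ∀ i j, i ≠ j → ∀ (a : A i) (b : A j), emb i a * emb j b = 0)
    {i : I} (c : A i) (d : D) : d * emb i c = emb i (coordProj emb i d * c) := by
  refine DFunLike.congr_fun (h.hom_ext (f := (ContinuousLinearMap.mul 𝕜 D).flip (emb i c))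
    (g := (emb i).comp (((ContinuousLinearMap.mul 𝕜 (A i)).flip c).comp (coordProj emb i)))
    fun j b => ?_) d
  by_cases hji : j = i
  · subst hji
    simp [h.coordProj_emb_self, hmul]
  · simp [h.coordProj_emb_of_ne hji, horth j i hji]

theorem coordProj_mul (h : IsLpDirectSum p emb)
    (hmul : ∀ i (a b : A i), emb i (a * b) = emb i a * emb i b)
    (horth : ∀ i j, i ≠ j → ∀ (a : A i) (b : A j), emb i a * emb j b = 0)
    (i : I) (d e : D) : coordProj emb i (d * e) = coordProj emb i d * coordProj emb i e := by
  refine DFunLike.congr_fun (h.hom_ext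
    (f := (coordProj emb i).comp ((ContinuousLinearMap.mul 𝕜 D).flip e))
    (g := ((ContinuousLinearMap.mul 𝕜 (A i)).flip (coordProj emb i e)).comp (coordProj emb i))
    fun j b => ?_) d
  by_cases hji : j = i
  · subst hji
    simp [h.emb_mul hmul horth, h.coordProj_emb_self]
  · simp [h.emb_mul hmul horth, h.coordProj_emb_of_ne hji]

end IsLpDirectSum

namespace ProjTensor

variable {E F E' F' : Type u} [NormedAddCommGroup E] [NormedSpace ℂ E] [NormedAddCommGroup F]
  [NormedSpace ℂ F] [NormedAddCommGroup E'] [NormedSpace ℂ E'] [NormedAddCommGroup F']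
  [NormedSpace ℂ F']

theorem hom_ext (t : ProjTensor E F) {W : Type*} [NormedAddCommGroup W] [NormedSpace ℂ W]
    {L L' : t.X →L[ℂ] W} (h : ∀ e f, L (t.tmul e f) = L' (t.tmul e f)) : L = L' :=
  ContinuousLinearMap.ext_on t.dense_span <| by
    rintro _ ⟨⟨e, f⟩, rfl⟩
    exact h e f

def map (t : ProjTensor E F) (t' : ProjTensor E' F') (f : E →L[ℂ] E') (g : F →L[ℂ] F') :
    t.X →L[ℂ] t'.X :=
  (t.lift t'.X (t'.tmul.bilinearComp f g)).choose

theorem map_tmul (t : ProjTensor E F) (t' : ProjTensor E' F') (f : E →L[ℂ] E') (g : F →L[ℂ] F')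
    (e : E) (x : F) : t.map t' f g (t.tmul e x) = t'.tmul (f e) (g x) :=
  (t.lift t'.X (t'.tmul.bilinearComp f g)).choose_spec.2 e x

end ProjTensor

namespace TensorSquare

section Map

variable {A B : Type u} [NonUnitalNormedRing A] [NormedSpace ℂ A] [NonUnitalNormedRing B]
  [NormedSpace ℂ B] (tsA : TensorSquare A) (tsB : TensorSquare B) {e : A →L[ℂ] B}
  {P : B →L[ℂ] A}

theorem rsmul_comp_map (he : ∀ a b, e a * b = e (a * P b)) (b : B) :
    (tsB.rsmul b).comp (tsA.map tsB.toProjTensor e e) =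
      (tsA.map tsB.toProjTensor e e).comp (tsA.rsmul (P b)) :=
  tsA.hom_ext fun a a' => by simp [ProjTensor.map_tmul, rsmul_tmul, he]

theorem lsmul_comp_map (he : ∀ a b, b * e a = e (P b * a)) (b : B) :
    (tsB.lsmul b).comp (tsA.map tsB.toProjTensor e e) =
      (tsA.map tsB.toProjTensor e e).comp (tsA.lsmul (P b)) :=
  tsA.hom_ext fun a a' => by simp [ProjTensor.map_tmul, lsmul_tmul, he]

theorem mulMap_comp_map (he : ∀ a a', e (a * a') = e a * e a') :
    tsB.mulMap.comp (tsA.map tsB.toProjTensor e e) = e.comp tsA.mulMap :=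
  tsA.hom_ext fun a a' => by simp [ProjTensor.map_tmul, mulMap_tmul, he]

def transfer (e : A →L[ℂ] B) (P : B →L[ℂ] A) (θ : (tsA.X →L[ℂ] ℂ) →L[ℂ] (A →L[ℂ] ℂ)) :
    (tsB.X →L[ℂ] ℂ) →L[ℂ] (B →L[ℂ] ℂ) :=
  ContinuousLinearMap.precomp ℂ P ∘L θ ∘L
    ContinuousLinearMap.precomp ℂ (tsA.map tsB.toProjTensor e e)

theorem transfer_piStar_apply (he : ∀ a a', e (a * a') = e a * e a')
    (θ : (tsA.X →L[ℂ] ℂ) →L[ℂ] (A →L[ℂ] ℂ)) (φ : B →L[ℂ] ℂ) (b : B) :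
    tsA.transfer tsB e P θ (tsB.piStar φ) b = θ (tsA.piStar (φ.comp e)) (P b) := by
  simp [transfer, piStar, ContinuousLinearMap.comp_assoc, mulMap_comp_map tsA tsB he]

end Map

variable {A B : Type u} [NonUnitalNormedRing A] [NormedSpace ℂ A] [IsScalarTower ℂ A A]
  [SMulCommClass ℂ A A] [NonUnitalNormedRing B] [NormedSpace ℂ B] [IsScalarTower ℂ B B]
  [SMulCommClass ℂ B B] {tsA : TensorSquare A} {tsB : TensorSquare B}

theorem IsBimoduleMorphism.sum {κ : Type*} {θ : κ → (tsA.X →L[ℂ] ℂ) →L[ℂ] (A →L[ℂ] ℂ)}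
    {s : Finset κ} (hθ : ∀ k ∈ s, tsA.IsBimoduleMorphism (θ k)) :
    tsA.IsBimoduleMorphism (∑ k ∈ s, θ k) := fun a ψ => by
  simp only [sum_apply, ContinuousLinearMap.finsetSum_comp]
  exact ⟨Finset.sum_congr rfl fun k hk => (hθ k hk a ψ).1,
    Finset.sum_congr rfl fun k hk => (hθ k hk a ψ).2⟩

theorem IsBimoduleMorphism.transfer {e : A →L[ℂ] B} {P : B →L[ℂ] A}
    {θ : (tsA.X →L[ℂ] ℂ) →L[ℂ] (A →L[ℂ] ℂ)} (hθ : tsA.IsBimoduleMorphism θ)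
    (hP : ∀ b b', P (b * b') = P b * P b') (hr : ∀ a b, e a * b = e (a * P b))
    (hl : ∀ a b, b * e a = e (P b * a)) :
    tsB.IsBimoduleMorphism (tsA.transfer tsB e P θ) := fun b ψ => by
  have hrT : (ψ ∘L tsB.rsmul b) ∘L tsA.map tsB.toProjTensor e e =
      (ψ ∘L tsA.map tsB.toProjTensor e e) ∘L tsA.rsmul (P b) := by
    rw [ContinuousLinearMap.comp_assoc, rsmul_comp_map tsA tsB hr, ContinuousLinearMap.comp_assoc]
  have hlT : (ψ ∘L tsB.lsmul b) ∘L tsA.map tsB.toProjTensor e e =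
      (ψ ∘L tsA.map tsB.toProjTensor e e) ∘L tsA.lsmul (P b) := by
    rw [ContinuousLinearMap.comp_assoc, lsmul_comp_map tsA tsB hl, ContinuousLinearMap.comp_assoc]
  constructor <;> ext x <;>
    simp only [TensorSquare.transfer, ContinuousLinearMap.comp_apply,
      ContinuousLinearMap.precomp_apply, hrT, hlT, (hθ (P b) _).1, (hθ (P b) _).2]
  · simp [rmulOp, hP]
  · simp [lmulOp, hP]

end TensorSquare

theorem HasSum.tendsto_finsetSum_of_tendsto {I : Type*} [DecidableEq I] {ι : I → Type*}
    [∀ i, Nonempty (ι i)] [∀ i, SemilatticeSup (ι i)] {E : Type*} [SeminormedAddCommGroup E] {x : ∀ i, ι i → E}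
    {y : I → E} {z : E} (hy : HasSum y z) (hx : ∀ i, Tendsto (x i) atTop (𝓝 (y i))) :
    Tendsto (fun d : Finset I × (Finset I → ∀ i, ι i) => ∑ i ∈ d.1, x i (d.2 d.1 i))
      atTop (𝓝 z) := by
  have hfst : Tendsto (fun d : Finset I × (Finset I → ∀ i, ι i) => d.1) atTop atTop := by
    rw [← prod_atTop_atTop_eq]
    exact tendsto_fst
  have herr : Tendsto (fun d : Finset I × (Finset I → ∀ i, ι i) =>
      ∑ i ∈ d.1, (x i (d.2 d.1 i) - y i)) atTop (𝓝 0) := by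
    refine Metric.tendsto_atTop.mpr fun ε hε => ?_
    have hN : ∀ (F : Finset I) i, ∃ N, ∀ δ ≥ N, ‖x i δ - y i‖ < ε / (F.card + 1) := fun F i =>
      by simpa [dist_eq_norm] using Metric.tendsto_atTop.mp (hx i) _ (by positivity)
    choose N hN using hN
    refine ⟨(∅, N), fun ⟨F, f⟩ hd => ?_⟩
    rw [dist_zero_right]
    calc ‖∑ i ∈ F, (x i (f F i) - y i)‖
        ≤ ∑ i ∈ F, ‖x i (f F i) - y i‖ := norm_sum_le _ _
      _ ≤ ∑ _i ∈ F, ε / (F.card + 1) := Finset.sum_le_sum fun i _ => (hN F i _ (hd.2 F i)).le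
      _ = F.card * ε / (F.card + 1) := by rw [Finset.sum_const, nsmul_eq_mul, mul_div_assoc]
      _ < ε := by rw [div_lt_iff₀ (by positivity)]; nlinarith
  have hy' : Tendsto (fun F : Finset I => ∑ i ∈ F, y i) atTop (𝓝 z) := hy
  simpa using (hy'.comp hfst).add herr

theorem lpDirectSum_approximatelyBiflat_general
    (p : ℝ) (hp : 1 ≤ p)
    (I : Type u) (A : I → Type u) [∀ i, NonUnitalNormedRing (A i)]
    [∀ i, NormedSpace ℂ (A i)] [∀ i, IsScalarTower ℂ (A i) (A i)]
    [∀ i, SMulCommClass ℂ (A i) (A i)] [∀ i, CompleteSpace (A i)]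
    (D : Type u) [NonUnitalNormedRing D] [NormedSpace ℂ D] [IsScalarTower ℂ D D]
    [SMulCommClass ℂ D D]
    (emb : ∀ i, A i →L[ℂ] D)
    (hemb_mul : ∀ (i) (a b : A i), emb i (a * b) = emb i a * emb i b)
    (hemb_orth : ∀ i j, i ≠ j → ∀ (a : A i) (b : A j), emb i a * emb j b = 0)
    (hemb_norm : ∀ (s : Finset I) (a : ∀ i, A i),
      ‖∑ i ∈ s, emb i (a i)‖ ^ p = ∑ i ∈ s, ‖a i‖ ^ p)
    (hemb_dense :
      Dense (↑(Submodule.span ℂ (⋃ i, Set.range (emb i))) : Set D))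
    (tsA : ∀ i, TensorSquare (A i)) (tsD : TensorSquare D)
    (hbiflat : ∀ i, (tsA i).ApproximatelyBiflat) :
    tsD.ApproximatelyBiflat := by
  classical
  have h : IsLpDirectSum p emb := ⟨by linarith, hemb_norm, hemb_dense⟩
  choose ι _ _ θ hθ using hbiflat
  refine ⟨Finset I × (Finset I → ∀ i, ι i), inferInstance, inferInstance,
    fun d => ∑ i ∈ d.1, (tsA i).transfer tsD (emb i) (coordProj emb i) (θ i (d.2 d.1 i)),
    fun d => TensorSquare.IsBimoduleMorphism.sum fun i _ => ((hθ i).1 _).transfer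
      (h.coordProj_mul hemb_mul hemb_orth i) (h.emb_mul hemb_mul hemb_orth)
      (h.mul_emb hemb_mul hemb_orth), fun a φ => ?_⟩
  simp only [sum_apply, TensorSquare.transfer_piStar_apply _ _ (hemb_mul _)]
  exact ((h.hasSum_emb_coordProj a).mapL φ).tendsto_finsetSum_of_tendsto
    (x := fun i δ => θ i δ ((tsA i).piStar (φ.comp (emb i))) (coordProj emb i a))
    fun i => (hθ i).2 _ _

/-- Proposition 2.8(i): let `{A_i : i ∈ I}` be a family of approximately
biflat Banach algebras.  Then for `1 ≤ p < ∞`, the `ℓᵖ`-direct sum `⊕ᵖ_{i∈I} A_i` (with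
coordinatewise multiplication) is approximately biflat.  The direct sum is realized as a
Banach algebra `D` together with isometric multiplicative embeddings `emb i : A i → D` with
orthogonal ranges spanning a dense subspace, whose finitely supported sums carry the
`ℓᵖ`-norm. -/
theorem lpDirectSum_approximatelyBiflat
    (p : ℝ) (hp : 1 ≤ p)
    (I : Type u) (A : I → Type u) [∀ i, NonUnitalNormedRing (A i)]
    [∀ i, NormedSpace ℂ (A i)] [∀ i, IsScalarTower ℂ (A i) (A i)]
    [∀ i, SMulCommClass ℂ (A i) (A i)] [∀ i, CompleteSpace (A i)]
    (D : Type u) [NonUnitalNormedRing D] [NormedSpace ℂ D] [IsScalarTower ℂ D D]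
    [SMulCommClass ℂ D D] [CompleteSpace D]
    (emb : ∀ i, A i →L[ℂ] D)
    (hemb_isometry : ∀ (i) (a : A i), ‖emb i a‖ = ‖a‖)
    (hemb_mul : ∀ (i) (a b : A i), emb i (a * b) = emb i a * emb i b)
    (hemb_orth : ∀ i j, i ≠ j → ∀ (a : A i) (b : A j), emb i a * emb j b = 0)
    (hemb_norm : ∀ (s : Finset I) (a : ∀ i, A i),
      ‖∑ i ∈ s, emb i (a i)‖ ^ p = ∑ i ∈ s, ‖a i‖ ^ p)
    (hemb_dense :
      Dense (↑(Submodule.span ℂ (⋃ i, Set.range (emb i))) : Set D))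
    (tsA : ∀ i, TensorSquare (A i)) (tsD : TensorSquare D)
    (hbiflat : ∀ i, (tsA i).ApproximatelyBiflat) :
    tsD.ApproximatelyBiflat :=
  lpDirectSum_approximatelyBiflat_general p hp I A D emb hemb_mul hemb_orth hemb_norm hemb_dense tsA
    tsD hbiflat
end
end
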